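/- If S₁, S₂ : ℝⁿ → ℝⁿ are β₁- and β₂-averaged operators respectively (β₁, β₂ ∈ (0,1)), then the composition S₁ ∘ S₂ is β-averaged for some β ∈ (0,1). -/

import Mathlib

/-!
Writing `S₂ x = (1 - β₂) x + β₂ U₂ x` and `S₁ y = (1 - β₁) y + β₁ U₁ y`, the coefficient of `x` in
`S₁ (S₂ x)` is `(1 - β₁)(1 - β₂) = 1 - β` with `β = β₁ + β₂ - β₁ β₂`, and the remaining terms are
`(1 - β₁) β₂ U₂ x + β₁ U₁ (S₂ x)`, whose weights sum to `β`. Dividing by `β` exhibits `U` as a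
convex combination of the non-expansive maps `U₂` and `U₁ ∘ S₂` (an averaged map is itself
non-expansive), so `U` is non-expansive.
-/

open Set

lemma LipschitzWith.smul_add_smul {α E : Type*} [PseudoEMetricSpace α] [SeminormedAddCommGroup E]
    [NormedSpace ℝ E] {f g : α → E} (hf : LipschitzWith 1 f) (hg : LipschitzWith 1 g)
    {a b : ℝ} (ha : 0 ≤ a) (hb : 0 ≤ b) (hab : a + b = 1) :
    LipschitzWith 1 fun x => a • f x + b • g x := by
  have h := ((lipschitzWith_smul a).comp hf).add ((lipschitzWith_smul b).comp hg)
  have hK : ‖a‖₊ * 1 + ‖b‖₊ * 1 = 1 := by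
    ext; simp [abs_of_nonneg ha, abs_of_nonneg hb, hab]
  rwa [hK] at h

section Averaged

variable {E : Type*} [SeminormedAddCommGroup E] [NormedSpace ℝ E]

def IsAveraged (β : ℝ) (S : E → E) : Prop :=
  ∃ U : E → E, LipschitzWith 1 U ∧ ∀ x, S x = (1 - β) • x + β • U x

lemma IsAveraged.lipschitzWith_one {β : ℝ} {S : E → E} (hS : IsAveraged β S)
    (hβ : β ∈ Icc (0 : ℝ) 1) : LipschitzWith 1 S := by
  obtain ⟨U, hU, hSU⟩ := hS
  rw [show S = _ from funext hSU]
  exact LipschitzWith.id.smul_add_smul hU (sub_nonneg.2 hβ.2) hβ.1 (sub_add_cancel 1 β)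

lemma IsAveraged.comp {β₁ β₂ : ℝ} {S₁ S₂ : E → E} (h₁ : IsAveraged β₁ S₁)
    (h₂ : IsAveraged β₂ S₂) (hβ₁ : β₁ ∈ Ioc (0 : ℝ) 1) (hβ₂ : β₂ ∈ Icc (0 : ℝ) 1) :
    IsAveraged (β₁ + β₂ - β₁ * β₂) (S₁ ∘ S₂) := by
  have hS₂lip := h₂.lipschitzWith_one hβ₂
  obtain ⟨U₁, hU₁, hS₁⟩ := h₁
  obtain ⟨U₂, hU₂, hS₂⟩ := h₂
  set β := β₁ + β₂ - β₁ * β₂ with hβ_def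
  have hβ_pos : 0 < β := by nlinarith [hβ₁.1, hβ₁.2, hβ₂.1]
  refine ⟨fun x => ((1 - β₁) * β₂ / β) • U₂ x + (β₁ / β) • U₁ (S₂ x),
    hU₂.smul_add_smul (mul_one (1 : NNReal) ▸ hU₁.comp hS₂lip) ?_ ?_ ?_, fun x => ?_⟩
  · exact div_nonneg (mul_nonneg (sub_nonneg.2 hβ₁.2) hβ₂.1) hβ_pos.le
  · exact div_nonneg hβ₁.1.le hβ_pos.le
  · rw [← add_div, div_eq_one_iff_eq hβ_pos.ne', hβ_def]; ring
  · rw [Function.comp_apply, hS₁]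
    nth_rw 1 [hS₂ x]
    rw [smul_add β, smul_smul, smul_smul,
      mul_div_cancel₀ _ hβ_pos.ne', mul_div_cancel₀ _ hβ_pos.ne', hβ_def]
    module

end Averaged

theorem composition_of_averaged_is_averaged
    (n : ℕ)
    (S₁ S₂ : EuclideanSpace ℝ (Fin n) → EuclideanSpace ℝ (Fin n))
    (β₁ β₂ : ℝ) (hβ₁ : β₁ ∈ Ioo (0 : ℝ) 1) (hβ₂ : β₂ ∈ Ioo (0 : ℝ) 1)
    (U₁ U₂ : EuclideanSpace ℝ (Fin n) → EuclideanSpace ℝ (Fin n))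
    (hU₁ : LipschitzWith 1 U₁) (hU₂ : LipschitzWith 1 U₂)
    (hS₁ : ∀ x, S₁ x = (1 - β₁) • x + β₁ • U₁ x)
    (hS₂ : ∀ x, S₂ x = (1 - β₂) • x + β₂ • U₂ x) :
    ∃ β ∈ Ioo (0 : ℝ) 1, ∃ U : EuclideanSpace ℝ (Fin n) → EuclideanSpace ℝ (Fin n),
      LipschitzWith 1 U ∧ ∀ x, (S₁ ∘ S₂) x = (1 - β) • x + β • U x := by
  obtain ⟨hβ₁_pos, hβ₁_lt⟩ := hβ₁
  obtain ⟨hβ₂_pos, hβ₂_lt⟩ := hβ₂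
  have hβ : β₁ + β₂ - β₁ * β₂ ∈ Ioo (0 : ℝ) 1 :=
    ⟨by nlinarith [mul_pos hβ₂_pos (sub_pos.2 hβ₁_lt)],
     by nlinarith [mul_pos (sub_pos.2 hβ₁_lt) (sub_pos.2 hβ₂_lt)]⟩
  exact ⟨_, hβ, IsAveraged.comp ⟨U₁, hU₁, hS₁⟩ ⟨U₂, hU₂, hS₂⟩
    ⟨hβ₁_pos, hβ₁_lt.le⟩ ⟨hβ₂_pos.le, hβ₂_lt.le⟩⟩
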